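/- Let g : [0,1] → ℂ be continuous and such that all of its negative-frequency Fourier coefficients vanish, i.e. ∫₀¹ g(x) e^{−2π√(−1) kx} dx = 0 for every integer k ≥ 1. Set c_j := ∫₀¹ g(x) e^{2π√(−1) jx} dx for j ∈ ℕ. Then for every j ∈ ℕ, ∫₀¹ (g(x))² e^{2π√(−1) jx} dx = Σ_{k=0}^{j} c_k c_{j−k}. -/

import Mathlib

/-!
The hypothesis says that the lift `F` of `g` to the unit circle has `F̂(n) = 0` for `n ≥ 1`, and
`c_k = F̂(-k)`. Parseval's identity, applied to `conj F` and `e_{-n} F`, shows that the Fourier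
coefficients of a product of two `L²` functions on the circle are the convolution of their
coefficients: `(F G)^(n) = ∑_{i ∈ ℤ} F̂(i) Ĝ(n - i)`. For `G = F` and `n = -j` only the terms
with `-j ≤ i ≤ 0` survive.
-/

open MeasureTheory AddCircle
open scoped ComplexConjugate ENNReal

theorem ContinuousOn.memLp_restrict_of_isCompact {X E : Type*} [TopologicalSpace X]
    [T2Space X] [MeasurableSpace X] [OpensMeasurableSpace X] [NormedAddCommGroup E] {μ : Measure X}
    [IsFiniteMeasureOnCompacts μ] {f : X → E} {s : Set X} (hs : IsCompact s)
    (hf : ContinuousOn f s) (p : ℝ≥0∞) : MemLp f p (μ.restrict s) := by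
  obtain ⟨C, hC⟩ := hs.exists_bound_of_continuousOn hf
  have : IsFiniteMeasure (μ.restrict s) := ⟨by simpa using hs.measure_lt_top⟩
  exact MemLp.of_bound (hf.aestronglyMeasurable_of_isCompact hs hs.measurableSet) C
    ((ae_restrict_iff' hs.measurableSet).mpr (ae_of_all _ hC))

section Circle

variable {T : ℝ} [Fact (0 < T)]

theorem fourierCoeff_conj (f : AddCircle T → ℂ) (n : ℤ) :
    fourierCoeff (fun t => conj (f t)) n = conj (fourierCoeff f (-n)) := by
  simp only [fourierCoeff, ← integral_conj, smul_eq_mul, map_mul, neg_neg, fourier_neg]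

theorem fourierCoeff_fourier_mul (f : AddCircle T → ℂ) (m n : ℤ) :
    fourierCoeff (fun t => fourier m t * f t) n = fourierCoeff f (n - m) := by
  simp only [fourierCoeff, smul_eq_mul, ← mul_assoc, ← fourier_add, neg_add_eq_sub, neg_sub]

theorem hasSum_prod_fourierCoeff (f g : Lp ℂ 2 (@haarAddCircle T _)) :
    HasSum (fun i => conj (fourierCoeff f i) * fourierCoeff g i)
      (∫ t, conj (f t) * g t ∂haarAddCircle) := by
  simp_rw [mul_comm (conj _)]
  refine HasSum.congr_fun (fourierBasis.hasSum_inner_mul_inner f g) (fun n ↦ ?_)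
  simp only [← fourierBasis_repr, HilbertBasis.repr_apply_apply, inner_conj_symm,
    mul_comm (inner ℂ f _)]

theorem MeasureTheory.MemLp.hasSum_prod_fourierCoeff {f g : AddCircle T → ℂ}
    (hf : MemLp f 2 AddCircle.haarAddCircle) (hg : MemLp g 2 AddCircle.haarAddCircle) :
    HasSum (fun i => conj (fourierCoeff f i) * fourierCoeff g i)
      (∫ t, conj (f t) * g t ∂AddCircle.haarAddCircle) := by
  have h := _root_.hasSum_prod_fourierCoeff (hf.toLp f) (hg.toLp g)
  rw [fourierCoeff_congr_ae hf.coeFn_toLp, fourierCoeff_congr_ae hg.coeFn_toLp] at h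
  convert h using 1
  refine integral_congr_ae ?_
  filter_upwards [hf.coeFn_toLp, hg.coeFn_toLp] with t hft hgt
  rw [hft, hgt]

theorem MeasureTheory.MemLp.hasSum_fourierCoeff_mul {f g : AddCircle T → ℂ}
    (hf : MemLp f 2 AddCircle.haarAddCircle) (hg : MemLp g 2 AddCircle.haarAddCircle) (n : ℤ) :
    HasSum (fun i => fourierCoeff f i * fourierCoeff g (n - i)) (fourierCoeff (f * g) n) := by
  have hf' : MemLp (fun t => conj (f t)) 2 AddCircle.haarAddCircle := hf.star
  have hg' : MemLp (fun t => fourier (-n) t * g t) 2 AddCircle.haarAddCircle := by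
    exact hg.mul' (BoundedContinuousFunction.mkOfCompact (fourier (-n))).memLp_top
  -- Parseval for `conj f` and `fourier (-n) * g`, reindexed by `i ↦ -i`.
  have h := (Equiv.neg ℤ).hasSum_iff.mpr (hf'.hasSum_prod_fourierCoeff hg')
  simp only [fourierCoeff_conj, fourierCoeff_fourier_mul, Function.comp_def, Equiv.neg_apply,
    neg_neg, sub_neg_eq_add, neg_add_eq_sub, Complex.conj_conj] at h
  simpa only [fourierCoeff, smul_eq_mul, Pi.mul_apply, mul_left_comm] using h

theorem MeasureTheory.MemLp.fourierCoeff_mul_neg_eq_sum {f g : AddCircle T → ℂ}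
    (hf : MemLp f 2 AddCircle.haarAddCircle) (hg : MemLp g 2 AddCircle.haarAddCircle)
    (hf₀ : ∀ n : ℤ, 0 < n → fourierCoeff f n = 0) (hg₀ : ∀ n : ℤ, 0 < n → fourierCoeff g n = 0)
    (j : ℕ) :
    fourierCoeff (f * g) (-j) =
      ∑ k ∈ Finset.range (j + 1), fourierCoeff f (-k) * fourierCoeff g (-(j - k : ℕ)) := by
  set s := (Finset.range (j + 1)).image fun k : ℕ => -(k : ℤ)
  have hsupp : ∀ i ∉ s, fourierCoeff f i * fourierCoeff g (-j - i) = 0 := by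
    intro i hi
    by_cases hi₀ : 0 < i
    · rw [hf₀ i hi₀, zero_mul]
    by_cases hij : 0 < -(j : ℤ) - i
    · rw [hg₀ _ hij, mul_zero]
    exact absurd (Finset.mem_image.mpr ⟨(-i).toNat, Finset.mem_range.mpr (by omega), by omega⟩) hi
  rw [(hf.hasSum_fourierCoeff_mul hg _).unique (hasSum_sum_of_ne_finset_zero hsupp),
    Finset.sum_image fun _ _ _ _ h => by simpa using h]
  refine Finset.sum_congr rfl fun k hk => ?_
  rw [Finset.mem_range] at hk
  congr 2
  omega

end Circle

theorem fourierCoeff_liftIoc_one_zero_neg (h : ℝ → ℂ) (m : ℤ) :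
    fourierCoeff (liftIoc 1 0 h) (-m) =
      ∫ x in (0:ℝ)..1, h x * Complex.exp (2 * Real.pi * Complex.I * m * x) := by
  rw [fourierCoeff_liftIoc_eq, fourierCoeffOn_eq_integral]
  simp only [fourier_coe_apply, neg_neg, zero_add, sub_zero, Complex.ofReal_one, div_one,
    one_smul, smul_eq_mul, mul_comm (Complex.exp _)]

theorem square_fourier_coefficient_convolution
    (g : ℝ → ℂ) (hg : ContinuousOn g (Set.Icc (0:ℝ) 1))
    (hneg : ∀ k : ℕ, 1 ≤ k →
      (∫ x in (0:ℝ)..1, g x * Complex.exp (-(2 * Real.pi * Complex.I * (k : ℂ) * (x : ℂ)))) = 0) :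
    ∀ j : ℕ,
      (∫ x in (0:ℝ)..1, (g x) ^ 2 * Complex.exp (2 * Real.pi * Complex.I * (j : ℂ) * (x : ℂ)))
        = ∑ k ∈ Finset.range (j + 1),
            (∫ x in (0:ℝ)..1, g x * Complex.exp (2 * Real.pi * Complex.I * (k : ℂ) * (x : ℂ))) *
            (∫ x in (0:ℝ)..1,
              g x * Complex.exp (2 * Real.pi * Complex.I * ((j - k : ℕ) : ℂ) * (x : ℂ))) := by
  intro j
  set F := liftIoc 1 0 g with hF_def
  have hF : MemLp F 2 haarAddCircle := by
    refine MemLp.haarAddCircle (MemLp.memLp_liftIoc ?_)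
    rw [zero_add]
    exact (hg.memLp_restrict_of_isCompact isCompact_Icc 2).mono_measure
      (Measure.restrict_mono Set.Ioc_subset_Icc_self le_rfl)
  have hF₀ : ∀ n : ℤ, 0 < n → fourierCoeff F n = 0 := by
    intro n hn
    lift n to ℕ using hn.le
    rw [← neg_neg (n : ℤ), fourierCoeff_liftIoc_one_zero_neg]
    convert hneg n (by omega) using 5
    push_cast
    ring
  have hsq : F * F = liftIoc 1 0 (fun x => g x ^ 2) := by
    ext t
    exact (sq _).symm
  have h := hF.fourierCoeff_mul_neg_eq_sum hF hF₀ hF₀ j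
  rw [hsq, hF_def] at h
  simpa only [fourierCoeff_liftIoc_one_zero_neg, Int.cast_natCast] using h
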